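/- Let a = (1, 3·2^{1/3}, −3·2^{2/3}) ∈ ℝ³, where 2^{1/3} is the real cube root of 2. Then the components of a are linearly independent over ℚ; the integer matrix B = [[1, 1, 1], [−18, 1, −3], [−18, 6, 1]] has determinant 1 or −1 and satisfies B·a = (1 + 3·2^{1/3} − 3·2^{2/3})·a, where 1 + 3·2^{1/3} − 3·2^{2/3} = (2^{1/3} − 1)³; neither 2^{1/3} − 1 nor (2^{1/3} − 1)² belongs to M(a); and M(a) = {ε·(2^{1/3} − 1)^{3k} : ε ∈ {1, −1}, k ∈ ℤ}. -/

import Mathlib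

open Matrix

/-- The multiplier set of a frequency vector `a`: the set of real numbers `α`
such that some integer matrix `B` of determinant `±1` satisfies `B · a = α • a`. -/
def MultSet {n : ℕ} (a : Fin n → ℝ) : Set ℝ :=
  {α : ℝ | ∃ B : Matrix (Fin n) (Fin n) ℤ,
    (B.det = 1 ∨ B.det = -1) ∧ ∀ i, α * a i = ∑ j, (B i j : ℝ) * a j}

/-- `a` is `F`-algebraic: for some nonzero `θ`, the numbers `θ * a i` lie in `F`
and form a `ℚ`-basis of `F`. -/
def IsFAlgebraic {n : ℕ} (F : Subfield ℝ) (a : Fin n → ℝ) : Prop :=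
  ∃ θ : ℝ, θ ≠ 0 ∧ ∃ bas : Module.Basis (Fin n) ℚ F, ∀ i, (bas i : ℝ) = θ * a i

/-- `MultSet a` is a finite-index subgroup of the unit group of the ring of
integers of `F`: every multiplier is a unit of `𝓞_F`, and finitely many units
`u i` suffice so that every unit of `𝓞_F` is some `u i` times a multiplier. -/
def MultSetFiniteIndexUnits {n : ℕ} (a : Fin n → ℝ) (F : Subfield ℝ) : Prop :=
  (∀ α ∈ MultSet a, ∃ u : (integralClosure ℤ F)ˣ,
      (((u : integralClosure ℤ F) : F) : ℝ) = α) ∧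
  ∃ m : ℕ, ∃ u : Fin m → (integralClosure ℤ F)ˣ,
    ∀ v : (integralClosure ℤ F)ˣ, ∃ i : Fin m, ∃ α ∈ MultSet a,
      (((v : integralClosure ℤ F) : F) : ℝ)
        = (((u i : integralClosure ℤ F) : F) : ℝ) * α

/-!
Write `c = ∛2`. A multiplier `α` of `a = (1, 3c, -3c²)` is the first row of its matrix applied
to `a`, so `α ∈ ℤ + 3ℤc + 3ℤc²`; multipliers form a group, so the same holds for `α⁻¹` and `α` is
a unit of `ℤ[c]`. Every unit of `ℤ[c]` is `±(c - 1)^k`: scaled by a power of `c - 1`, a positive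
unit lands in `[1, (c - 1)⁻¹)`, has norm `1`, and bounding its coordinates through its complex
conjugates leaves only `1`. Finally `(c - 1)³` is realised by `B`, while the `c`-coordinates of
`c - 1` and `(c - 1)²` are prime to `3`, so `3 ∣ k`.
-/

section MultSet

variable {n : ℕ} {a : Fin n → ℝ} {α β : ℝ}

theorem mem_multSet_iff : α ∈ MultSet a ↔
    ∃ B : Matrix (Fin n) (Fin n) ℤ, IsUnit B ∧ α • a = (Int.castRingHom ℝ).mapMatrix B *ᵥ a := by
  simp only [MultSet, Set.mem_ofPred_eq, isUnit_iff_isUnit_det, Int.isUnit_iff, funext_iff,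
    Pi.smul_apply, smul_eq_mul, mulVec, dotProduct, RingHom.mapMatrix_apply, map_apply,
    eq_intCast]

theorem one_mem_multSet : (1 : ℝ) ∈ MultSet a :=
  mem_multSet_iff.2 ⟨1, isUnit_one, by simp⟩

theorem neg_mem_multSet (h : α ∈ MultSet a) : -α ∈ MultSet a := by
  obtain ⟨B, hB, hBa⟩ := mem_multSet_iff.1 h
  exact mem_multSet_iff.2 ⟨-B, hB.neg, by rw [map_neg, neg_mulVec, ← hBa, neg_smul]⟩

theorem mul_mem_multSet (hα : α ∈ MultSet a) (hβ : β ∈ MultSet a) : α * β ∈ MultSet a := by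
  obtain ⟨B, hB, hBa⟩ := mem_multSet_iff.1 hα
  obtain ⟨C, hC, hCa⟩ := mem_multSet_iff.1 hβ
  refine mem_multSet_iff.2 ⟨C * B, hC.mul hB, ?_⟩
  rw [mul_smul, hCa, ← mulVec_smul, hBa, mulVec_mulVec, map_mul]

theorem inv_mem_multSet (h : α ∈ MultSet a) : α⁻¹ ∈ MultSet a := by
  rcases eq_or_ne α 0 with rfl | hα
  · rwa [_root_.inv_zero]
  obtain ⟨B, hB, hBa⟩ := mem_multSet_iff.1 h
  refine mem_multSet_iff.2 ⟨B⁻¹, isUnit_nonsing_inv_iff.2 hB, ?_⟩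
  have hinv : (Int.castRingHom ℝ).mapMatrix B⁻¹ *ᵥ (α • a) = a := by
    rw [hBa, mulVec_mulVec, ← map_mul, nonsing_inv_mul _ ((isUnit_iff_isUnit_det B).1 hB),
      map_one, one_mulVec]
  rw [mulVec_smul] at hinv
  exact ((eq_inv_smul_iff₀ hα).2 hinv).symm

theorem zpow_mem_multSet (h : α ∈ MultSet a) (k : ℤ) : α ^ k ∈ MultSet a := by
  have hpow (m : ℕ) : α ^ m ∈ MultSet a := by
    induction m with
    | zero => simpa using one_mem_multSet
    | succ m ih => simpa [pow_succ] using mul_mem_multSet ih h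
  cases k with
  | ofNat m => simpa using hpow m
  | negSucc m => simpa using inv_mem_multSet (hpow (m + 1))

theorem ne_zero_of_mem_multSet (ha : a ≠ 0) (h : α ∈ MultSet a) : α ≠ 0 := by
  rintro rfl
  obtain ⟨B, hB, hBa⟩ := mem_multSet_iff.1 h
  refine ha (eq_zero_of_mulVec_eq_zero ?_ (by rw [← hBa, zero_smul]))
  rw [← RingHom.map_det]
  exact ((isUnit_iff_isUnit_det B).1 hB).map _ |>.ne_zero

end MultSet

open Polynomial

/-- The norm of `x + y ∛2 + z ∛4` from `ℚ(∛2)` down to `ℚ`. -/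
def cubicNorm {R : Type*} [CommRing R] (x y z : R) : R :=
  x ^ 3 + 2 * y ^ 3 + 4 * z ^ 3 - 6 * x * y * z

@[simp, norm_cast]
theorem cubicNorm_intCast (x y z : ℤ) :
    ((cubicNorm x y z : ℤ) : ℝ) = cubicNorm (x : ℝ) y z := by
  simp [cubicNorm]

theorem cubicNorm_mul {R : Type*} [CommRing R] (x y z x' y' z' : R) :
    cubicNorm x y z * cubicNorm x' y' z' =
      cubicNorm (x * x' + 2 * (y * z' + z * y')) (x * y' + y * x' + 2 * z * z')
        (x * z' + y * y' + z * x') := by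
  simp only [cubicNorm]; ring

theorem Rat.pow_three_ne_two (b : ℚ) : b ^ 3 ≠ 2 := by
  intro h
  have hnum : b.num ^ 3 = 2 := by simpa using congrArg Rat.num h
  rcases le_or_gt b.num 1 with hb | hb
  · nlinarith [sq_nonneg (2 * b.num + 1), sq_nonneg b.num]
  · nlinarith [sq_nonneg b.num]

theorem Int.mem_Icc_zero_one_of_cast_bounds {m : ℤ} (h0 : (-1 : ℝ) < m) (h1 : (m : ℝ) < 2) :
    m ∈ Set.Icc 0 1 := by
  have : -1 < m ∧ m < 2 := ⟨by exact_mod_cast h0, by exact_mod_cast h1⟩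
  exact ⟨by omega, by omega⟩

theorem abs_le_of_mul_sq_le {lo w d b : ℝ} (hlo : 0 < lo) (hw : lo ≤ w) (hb : 0 ≤ b)
    (h : w * d ^ 2 ≤ lo * b ^ 2) : |d| ≤ b := by
  have : d ^ 2 ≤ b ^ 2 :=
    le_of_mul_le_mul_left ((mul_le_mul_of_nonneg_right hw (sq_nonneg d)).trans h) hlo
  exact (sq_le_sq.1 this).trans_eq (abs_of_nonneg hb)

namespace CubeRootTwo

variable {c : ℝ}

theorem minpoly_eq (hc3 : c ^ 3 = 2) : minpoly ℚ c = X ^ 3 - C 2 := by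
  refine (minpoly.eq_of_irreducible_of_monic
    (X_pow_sub_C_irreducible_of_prime Nat.prime_three Rat.pow_three_ne_two) ?_
    (monic_X_pow_sub_C _ three_ne_zero)).symm
  simp [hc3]

theorem linearIndependent_pow (hc3 : c ^ 3 = 2) :
    LinearIndependent ℚ fun i : Fin 3 => c ^ (i : ℕ) := by
  have h := _root_.linearIndependent_pow (K := ℚ) c
  rwa [minpoly_eq hc3, natDegree_X_pow_sub_C] at h

theorem rat_coeffs_eq_zero (hc3 : c ^ 3 = 2) {p q r : ℚ}
    (h : (p : ℝ) + q * c + r * c ^ 2 = 0) : p = 0 ∧ q = 0 ∧ r = 0 := by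
  have := Fintype.linearIndependent_iff.1 (linearIndependent_pow hc3) ![p, q, r]
    (by simpa [Fin.sum_univ_three, Rat.smul_def] using h)
  exact ⟨this 0, this 1, this 2⟩

theorem coords_injective (hc3 : c ^ 3 = 2) {x y z x' y' z' : ℤ}
    (h : (x : ℝ) + y * c + z * c ^ 2 = x' + y' * c + z' * c ^ 2) :
    x = x' ∧ y = y' ∧ z = z' := by
  have := rat_coeffs_eq_zero hc3 (p := x - x') (q := y - y') (r := z - z')
    (by push_cast; linear_combination h)
  simp only [sub_eq_zero, Int.cast_inj] at this
  exact this

theorem coords_mul (hc3 : c ^ 3 = 2) (x y z x' y' z' : ℝ) :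
    (x + y * c + z * c ^ 2) * (x' + y' * c + z' * c ^ 2) =
      (x * x' + 2 * (y * z' + z * y')) + (x * y' + y * x' + 2 * z * z') * c
        + (x * z' + y * y' + z * x') * c ^ 2 := by
  linear_combination (z * y' + y * z' + c * z * z') * hc3

theorem mem_adjoin_iff (hc3 : c ^ 3 = 2) {v : ℝ} :
    v ∈ Algebra.adjoin ℤ {c} ↔ ∃ x y z : ℤ, v = x + y * c + z * c ^ 2 := by
  constructor
  · intro hv
    induction hv using Algebra.adjoin_induction with
    | mem v hv => exact ⟨0, 1, 0, by simp [Set.mem_singleton_iff.1 hv]⟩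
    | algebraMap r => exact ⟨r, 0, 0, by simp⟩
    | add v w _ _ hv hw =>
      obtain ⟨x, y, z, rfl⟩ := hv
      obtain ⟨x', y', z', rfl⟩ := hw
      exact ⟨x + x', y + y', z + z', by push_cast; ring⟩
    | mul v w _ _ hv hw =>
      obtain ⟨x, y, z, rfl⟩ := hv
      obtain ⟨x', y', z', rfl⟩ := hw
      exact ⟨x * x' + 2 * (y * z' + z * y'), x * y' + y * x' + 2 * z * z',
        x * z' + y * y' + z * x', by rw [coords_mul hc3]; push_cast; rfl⟩
  · rintro ⟨x, y, z, rfl⟩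
    have hc := Algebra.self_mem_adjoin_singleton ℤ c
    exact add_mem (add_mem (intCast_mem _ x) (mul_mem (intCast_mem _ y) hc))
      (mul_mem (intCast_mem _ z) (pow_mem hc 2))

theorem inv_sub_one (hc3 : c ^ 3 = 2) : (c - 1)⁻¹ = c ^ 2 + c + 1 :=
  inv_eq_of_mul_eq_one_right (by linear_combination hc3)

theorem sub_one_zpow_mem (hc3 : c ^ 3 = 2) (k : ℤ) : (c - 1) ^ k ∈ Algebra.adjoin ℤ {c} := by
  have hc := Algebra.self_mem_adjoin_singleton ℤ c
  obtain ⟨m, rfl | rfl⟩ := k.eq_nat_or_neg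
  · simpa using pow_mem (sub_mem hc (one_mem _)) m
  · rw [_root_.zpow_neg, ← _root_.inv_zpow, inv_sub_one hc3]
    simpa using pow_mem (add_mem (add_mem (pow_mem hc 2) hc) (one_mem _)) m

theorem one_point_two_lt (hc3 : c ^ 3 = 2) : 1.2 < c := by
  nlinarith [sq_nonneg (c + 0.6), sq_nonneg c]

theorem lt_one_point_three (hc3 : c ^ 3 = 2) : c < 1.3 := by
  nlinarith [one_point_two_lt hc3, sq_nonneg c]

/-- `3x - v` and `cubicNorm x y z / v` are the sum and the product of the two complex conjugates of
`v = x + y c + z c²`, so this is the nonpositivity of their discriminant. -/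
theorem mul_sq_le_cubicNorm (hc3 : c ^ 3 = 2) {x y z : ℝ} (hv : 0 < x + y * c + z * c ^ 2) :
    (x + y * c + z * c ^ 2) * (3 * x - (x + y * c + z * c ^ 2)) ^ 2 ≤ 4 * cubicNorm x y z := by
  have hc := (one_point_two_lt hc3).trans' (by norm_num : (0 : ℝ) < 1.2)
  have key : c * (4 * cubicNorm x y z - (x + y * c + z * c ^ 2)
      * (3 * x - (x + y * c + z * c ^ 2)) ^ 2) = 6 * (x + y * c + z * c ^ 2) * (y - c * z) ^ 2 := by
    simp only [cubicNorm]
    linear_combination (3 * x * y ^ 2 - 8 * c * z ^ 3 - c * y ^ 3 + 6 * c * x * y * z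
      - 3 * c ^ 2 * y ^ 2 * z + 3 * c ^ 2 * x * z ^ 2 - 3 * c ^ 3 * y * z ^ 2
      - c ^ 4 * z ^ 3) * hc3
  nlinarith [mul_nonneg hv.le (sq_nonneg (y - c * z))]

theorem exists_cubicNorm_eq_one (hc3 : c ^ 3 = 2) {u : ℝ} (hu : u ∈ Algebra.adjoin ℤ {c})
    (hu' : u⁻¹ ∈ Algebra.adjoin ℤ {c}) (hpos : 0 < u) :
    ∃ x y z : ℤ, u = x + y * c + z * c ^ 2 ∧ cubicNorm x y z = 1 := by
  obtain ⟨x, y, z, rfl⟩ := (mem_adjoin_iff hc3).1 hu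
  obtain ⟨x', y', z', hu'⟩ := (mem_adjoin_iff hc3).1 hu'
  have hprod := coords_injective hc3 (x := x * x' + 2 * (y * z' + z * y'))
    (y := x * y' + y * x' + 2 * z * z') (z := x * z' + y * y' + z * x') (x' := 1) (y' := 0)
    (z' := 0) (by
      push_cast
      rw [← coords_mul hc3, ← hu', mul_inv_cancel₀ hpos.ne']
      simp)
  have hN : cubicNorm x y z * cubicNorm x' y' z' = 1 := by
    rw [cubicNorm_mul, hprod.1, hprod.2.1, hprod.2.2]
    norm_num [cubicNorm]
  refine ⟨x, y, z, rfl, ?_⟩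
  rcases Int.mul_eq_one_iff_eq_one_or_neg_one.1 hN with ⟨h, -⟩ | ⟨h, -⟩
  · exact h
  · have := (mul_nonneg hpos.le (sq_nonneg _)).trans (mul_sq_le_cubicNorm hc3 hpos)
    rw [← cubicNorm_intCast, h] at this
    norm_num at this

theorem coords_mem_Icc (hc3 : c ^ 3 = 2) {x y z : ℤ} (hN : cubicNorm x y z = 1)
    (h1 : 1 ≤ (x : ℝ) + y * c + z * c ^ 2) (ht : (x : ℝ) + y * c + z * c ^ 2 < c ^ 2 + c + 1) :
    x ∈ Set.Icc 0 1 ∧ y ∈ Set.Icc 0 1 ∧ z ∈ Set.Icc 0 1 := by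
  have hlo := one_point_two_lt hc3
  have hhi := lt_one_point_three hc3
  have hNr : cubicNorm (x : ℝ) y z = 1 := by exact_mod_cast hN
  obtain ⟨v, hv⟩ : ∃ v, v = (x : ℝ) + y * c + z * c ^ 2 := ⟨_, rfl⟩
  rw [← hv] at h1 ht
  have hvc : (2 * z : ℝ) + x * c + y * c ^ 2 = c * v := by
    rw [hv]; linear_combination -(z : ℝ) * hc3
  have hvc2 : (2 * y : ℝ) + 2 * z * c + x * c ^ 2 = c ^ 2 * v := by
    rw [hv]; linear_combination -((y : ℝ) + c * z) * hc3
  have hc2 : 1.44 < c ^ 2 ∧ c ^ 2 < 1.69 := ⟨by nlinarith, by nlinarith⟩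
  have hv4 : v < 3.99 := by linarith
  have hcv : 1.2 < c * v ∧ c * v < 5.2 := ⟨by nlinarith, by nlinarith⟩
  have hc2v : 1.44 < c ^ 2 * v ∧ c ^ 2 * v < 6.75 := ⟨by nlinarith, by nlinarith⟩
  -- `c v` and `c² v` have coordinates `(2z, x, y)` and `(2y, 2z, x)` and norms `2` and `4`.
  have hx := mul_sq_le_cubicNorm hc3 (x := x) (y := y) (z := z) (by linarith)
  have hz := mul_sq_le_cubicNorm hc3 (x := 2 * z) (y := x) (z := y) (by linarith)
  have hy := mul_sq_le_cubicNorm hc3 (x := 2 * y) (y := 2 * z) (z := x) (by linarith)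
  rw [← hv, hNr] at hx
  rw [hvc, show cubicNorm (2 * (z : ℝ)) x y = 2 * cubicNorm (x : ℝ) y z by
    simp only [cubicNorm]; ring, hNr] at hz
  rw [hvc2, show cubicNorm (2 * (y : ℝ)) (2 * z) x = 4 * cubicNorm (x : ℝ) y z by
    simp only [cubicNorm]; ring, hNr] at hy
  obtain ⟨hx1, hx2⟩ := abs_le.1 <| abs_le_of_mul_sq_le (d := 3 * x - v) (b := 2)
    one_pos h1 (by norm_num) (by linarith)
  obtain ⟨hz1, hz2⟩ := abs_le.1 <| abs_le_of_mul_sq_le (d := 3 * (2 * z) - c * v) (b := 3)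
    (by norm_num) hcv.1.le (by norm_num) (by linarith)
  obtain ⟨hy1, hy2⟩ := abs_le.1 <| abs_le_of_mul_sq_le (d := 3 * (2 * y) - c ^ 2 * v) (b := 4)
    (by norm_num) hc2v.1.le (by norm_num) (by linarith)
  exact ⟨Int.mem_Icc_zero_one_of_cast_bounds (by linarith) (by linarith),
    Int.mem_Icc_zero_one_of_cast_bounds (by linarith) (by linarith),
    Int.mem_Icc_zero_one_of_cast_bounds (by linarith) (by linarith)⟩

theorem eq_one_of_inv_mem (hc3 : c ^ 3 = 2) {u : ℝ} (hu : u ∈ Algebra.adjoin ℤ {c})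
    (hu' : u⁻¹ ∈ Algebra.adjoin ℤ {c}) (h1 : 1 ≤ u) (ht : u < c ^ 2 + c + 1) : u = 1 := by
  obtain ⟨x, y, z, rfl, hN⟩ := exists_cubicNorm_eq_one hc3 hu hu' (by linarith)
  obtain ⟨⟨hx0, hx1⟩, ⟨hy0, hy1⟩, ⟨hz0, hz1⟩⟩ := coords_mem_Icc hc3 hN h1 ht
  have hxyz : x = 1 ∧ y = 0 ∧ z = 0 ∨ x = 1 ∧ y = 1 ∧ z = 1 := by
    interval_cases x <;> interval_cases y <;> interval_cases z <;> simp [cubicNorm] at hN ⊢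
  rcases hxyz with ⟨rfl, rfl, rfl⟩ | ⟨rfl, rfl, rfl⟩
  · norm_num
  · push_cast at ht
    linarith

theorem exists_abs_eq_zpow (hc3 : c ^ 3 = 2) {v : ℝ} (hv : v ∈ Algebra.adjoin ℤ {c})
    (hv' : v⁻¹ ∈ Algebra.adjoin ℤ {c}) (hne : v ≠ 0) : ∃ k : ℤ, |v| = (c - 1) ^ k := by
  have habs {w : ℝ} (hw : w ∈ Algebra.adjoin ℤ {c}) : |w| ∈ Algebra.adjoin ℤ {c} := by
    rcases abs_choice w with h | h <;> rw [h]
    exacts [hw, neg_mem hw]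
  have ht : 1 < c ^ 2 + c + 1 := by nlinarith [one_point_two_lt hc3]
  obtain ⟨n, hn1, hn2⟩ := exists_mem_Ico_zpow (abs_pos.2 hne) ht
  have htn : 0 < (c ^ 2 + c + 1) ^ n := zpow_pos (by linarith) n
  have hcn : (c - 1) ^ n = ((c ^ 2 + c + 1) ^ n)⁻¹ := by
    rw [← inv_sub_one hc3, _root_.inv_zpow, inv_inv]
  have hone := eq_one_of_inv_mem hc3 (u := |v| * (c - 1) ^ n)
    (mul_mem (habs hv) (sub_one_zpow_mem hc3 n))
    (by
      rw [mul_inv, ← abs_inv, ← _root_.zpow_neg]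
      exact mul_mem (habs hv') (sub_one_zpow_mem hc3 _))
    (by rwa [hcn, ← div_eq_mul_inv, le_div_iff₀ htn, one_mul])
    (by rwa [hcn, ← div_eq_mul_inv, div_lt_iff₀ htn, mul_comm, ← zpow_add_one₀ (by linarith)])
  exact ⟨-n, by rw [_root_.zpow_neg]; exact eq_inv_of_mul_eq_one_left hone⟩

theorem linearIndependent_frequency (hc3 : c ^ 3 = 2) :
    LinearIndependent ℚ ![(1 : ℝ), 3 * c, -3 * c ^ 2] := by
  refine Fintype.linearIndependent_iff.2 fun g hg => ?_
  simp only [Rat.smul_def, Fin.sum_univ_three, cons_val_zero, cons_val_one, cons_val] at hg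
  obtain ⟨h0, h1, h2⟩ := rat_coeffs_eq_zero hc3 (p := g 0) (q := 3 * g 1) (r := -3 * g 2)
    (by push_cast; linear_combination hg)
  have hg1 : g 1 = 0 := by linarith
  have hg2 : g 2 = 0 := by linarith
  intro i
  fin_cases i <;> assumption

theorem matB_mul_frequency (hc3 : c ^ 3 = 2) :
    ∀ i, (1 + 3 * c - 3 * c ^ 2) * ![(1 : ℝ), 3 * c, -3 * c ^ 2] i
      = ∑ j, ((!![1, 1, 1; -18, 1, -3; -18, 6, 1] : Matrix (Fin 3) (Fin 3) ℤ) i j : ℝ)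
          * ![(1 : ℝ), 3 * c, -3 * c ^ 2] j := by
  intro i
  fin_cases i <;>
    simp only [Fin.zero_eta, Fin.mk_one, Fin.reduceFinMk, Fin.isValue, Fin.sum_univ_three, of_apply,
      cons_val', cons_val_zero, cons_val_one, cons_val, cons_val_fin_one]
  · ring
  · linear_combination (-9 : ℝ) * hc3
  · linear_combination (-9 + 9 * c) * hc3

theorem det_matB : (!![1, 1, 1; -18, 1, -3; -18, 6, 1] : Matrix (Fin 3) (Fin 3) ℤ).det = 1 := by
  simp [det_fin_three]

theorem one_add_three_mul_sub_eq (hc3 : c ^ 3 = 2) : 1 + 3 * c - 3 * c ^ 2 = (c - 1) ^ 3 := by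
  linear_combination -hc3

theorem sub_one_pow_three_mem_multSet (hc3 : c ^ 3 = 2) :
    (c - 1) ^ 3 ∈ MultSet ![(1 : ℝ), 3 * c, -3 * c ^ 2] :=
  ⟨_, Or.inl det_matB, one_add_three_mul_sub_eq hc3 ▸ matB_mul_frequency hc3⟩

theorem exists_coords_of_mem_multSet {α : ℝ} (h : α ∈ MultSet ![(1 : ℝ), 3 * c, -3 * c ^ 2]) :
    ∃ x y z : ℤ, α = x + ((3 * y : ℤ) : ℝ) * c + ((3 * z : ℤ) : ℝ) * c ^ 2 := by
  obtain ⟨B, -, hB⟩ := h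
  refine ⟨B 0 0, B 0 1, -B 0 2, ?_⟩
  have h0 := hB 0
  simp only [Fin.sum_univ_three, cons_val_zero, cons_val_one, cons_val] at h0
  push_cast
  linear_combination h0

theorem mem_adjoin_of_mem_multSet (hc3 : c ^ 3 = 2) {α : ℝ}
    (h : α ∈ MultSet ![(1 : ℝ), 3 * c, -3 * c ^ 2]) : α ∈ Algebra.adjoin ℤ {c} := by
  obtain ⟨x, y, z, rfl⟩ := exists_coords_of_mem_multSet h
  exact (mem_adjoin_iff hc3).2 ⟨_, _, _, rfl⟩

theorem sub_one_not_mem_multSet (hc3 : c ^ 3 = 2) :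
    c - 1 ∉ MultSet ![(1 : ℝ), 3 * c, -3 * c ^ 2] := by
  intro h
  obtain ⟨x, y, z, hxyz⟩ := exists_coords_of_mem_multSet h
  have := coords_injective hc3 (x := x) (y := 3 * y) (z := 3 * z) (x' := -1) (y' := 1) (z' := 0)
    (by push_cast at hxyz ⊢; linear_combination -hxyz)
  omega

theorem sub_one_sq_not_mem_multSet (hc3 : c ^ 3 = 2) :
    (c - 1) ^ 2 ∉ MultSet ![(1 : ℝ), 3 * c, -3 * c ^ 2] := by
  intro h
  obtain ⟨x, y, z, hxyz⟩ := exists_coords_of_mem_multSet h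
  have := coords_injective hc3 (x := x) (y := 3 * y) (z := 3 * z) (x' := 1) (y' := -2) (z' := 1)
    (by push_cast at hxyz ⊢; linear_combination -hxyz)
  omega

theorem three_dvd_of_zpow_mem_multSet (hc3 : c ^ 3 = 2) {k : ℤ}
    (hk : (c - 1) ^ k ∈ MultSet ![(1 : ℝ), 3 * c, -3 * c ^ 2]) : 3 ∣ k := by
  have hc1 : c - 1 ≠ 0 := by linarith [one_point_two_lt hc3]
  have hmod : (c - 1) ^ (k % 3) ∈ MultSet ![(1 : ℝ), 3 * c, -3 * c ^ 2] := by
    rw [Int.emod_def, zpow_sub₀ hc1, _root_.zpow_mul]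
    exact mul_mem_multSet hk
      (inv_mem_multSet (zpow_mem_multSet (by simpa using sub_one_pow_three_mem_multSet hc3) _))
  have : k % 3 = 0 ∨ k % 3 = 1 ∨ k % 3 = 2 := by omega
  rcases this with h | h | h
  · exact Int.dvd_of_emod_eq_zero h
  · exact absurd (by simpa [h] using hmod) (sub_one_not_mem_multSet hc3)
  · exact absurd (by simpa [h] using hmod) (sub_one_sq_not_mem_multSet hc3)

theorem multSet_eq (hc3 : c ^ 3 = 2) :
    MultSet ![(1 : ℝ), 3 * c, -3 * c ^ 2] = {x : ℝ | ∃ ε : ℝ, (ε = 1 ∨ ε = -1) ∧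
        ∃ k : ℤ, x = ε * (c - 1) ^ (3 * k)} := by
  ext α
  constructor
  · intro hα
    have hne : α ≠ 0 := ne_zero_of_mem_multSet (fun h => by simpa using congrFun h 0) hα
    obtain ⟨k, hk⟩ := exists_abs_eq_zpow hc3 (mem_adjoin_of_mem_multSet hc3 hα)
      (mem_adjoin_of_mem_multSet hc3 (inv_mem_multSet hα)) hne
    rcases abs_choice α with h | h
    · obtain ⟨m, rfl⟩ := three_dvd_of_zpow_mem_multSet hc3 (by rwa [← hk, h])
      exact ⟨1, .inl rfl, m, by rw [one_mul, ← hk, h]⟩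
    · obtain ⟨m, rfl⟩ :=
        three_dvd_of_zpow_mem_multSet hc3 (by rw [← hk, h]; exact neg_mem_multSet hα)
      exact ⟨-1, .inr rfl, m, by rw [← hk, h]; ring⟩
  · rintro ⟨ε, hε, k, rfl⟩
    have hk : (c - 1) ^ (3 * k) ∈ MultSet ![(1 : ℝ), 3 * c, -3 * c ^ 2] := by
      rw [_root_.zpow_mul]
      exact_mod_cast zpow_mem_multSet (sub_one_pow_three_mem_multSet hc3) k
    rcases hε with rfl | rfl
    · simpa using hk
    · simpa using neg_mem_multSet hk

end CubeRootTwo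

open CubeRootTwo in
/-- for `a = (1, 3·2^(1/3), -3·2^(2/3))`: the components are
`ℚ`-linearly independent, the matrix `B = [[1,1,1],[-18,1,-3],[-18,6,1]]` has
determinant `±1` and realizes the multiplier
`1 + 3·2^(1/3) - 3·2^(2/3) = (2^(1/3) - 1)³`, neither `2^(1/3) - 1` nor
`(2^(1/3) - 1)²` is a multiplier, and `M(a) = {±(2^(1/3)-1)^(3k) : k ∈ ℤ}`. -/
theorem cbrt2_flow_example (c : ℝ) (hc : c = (2 : ℝ) ^ ((1 : ℝ) / 3))
    (a : Fin 3 → ℝ) (ha : a = ![(1 : ℝ), 3 * c, -3 * c ^ 2]) :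
    LinearIndependent ℚ a ∧
    (((!![1, 1, 1; -18, 1, -3; -18, 6, 1] : Matrix (Fin 3) (Fin 3) ℤ).det = 1 ∨
      (!![1, 1, 1; -18, 1, -3; -18, 6, 1] : Matrix (Fin 3) (Fin 3) ℤ).det = -1) ∧
      ∀ i, (1 + 3 * c - 3 * c ^ 2) * a i
        = ∑ j, ((!![1, 1, 1; -18, 1, -3; -18, 6, 1] : Matrix (Fin 3) (Fin 3) ℤ) i j : ℝ)
            * a j) ∧
    1 + 3 * c - 3 * c ^ 2 = (c - 1) ^ 3 ∧
    (c - 1) ∉ MultSet a ∧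
    (c - 1) ^ 2 ∉ MultSet a ∧
    MultSet a = {x : ℝ | ∃ ε : ℝ, (ε = 1 ∨ ε = -1) ∧
        ∃ k : ℤ, x = ε * (c - 1) ^ (3 * k)} := by
  have hc3 : c ^ 3 = 2 := by
    rw [hc, ← Real.rpow_natCast, ← Real.rpow_mul (by norm_num)]
    norm_num
  subst ha
  exact ⟨linearIndependent_frequency hc3, ⟨Or.inl det_matB, matB_mul_frequency hc3⟩,
    one_add_three_mul_sub_eq hc3, sub_one_not_mem_multSet hc3, sub_one_sq_not_mem_multSet hc3,
    multSet_eq hc3⟩
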